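/- Fix $t > 0$. Define $\mathcal{T}^{(c)}(\phi)(s) = \phi_s - \frac{1}{c}\log\{1 + \frac{A_s(c\phi)}{A_t(c\phi)}(e^{2c\phi_t}-1)\}$ with $A_s(\psi) = \int_0^s e^{2\psi_u}du$. Then for every continuous $\phi : [0,t]\to\mathbb{R}$ with $\phi_0 = 0$ and every $s \in [0,t]$, $\mathcal{T}^{(c)}(\phi)(s) \to \mathcal{M}(\phi)(s)$ as $c \to \infty$, where $\mathcal{M}(\phi)(s) = \phi_s - \phi_t - |\phi_t + \max_{[0,s]}\phi - \max_{[s,t]}\phi| + |\max_{[0,s]}\phi - \max_{[s,t]}\phi|$. -/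

import Mathlib

open Filter

section Aux

open MeasureTheory intervalIntegral Real Set

lemma one_div_tendsto_zero : Tendsto (fun c : ℝ => 1/c) atTop (nhds 0) := by
  simpa [one_div] using tendsto_inv_atTop_zero (𝕜 := ℝ)

lemma log_add_tendsto {u v : ℝ → ℝ} {α β : ℝ} (hu : ∀ c, 1 ≤ c → 0 < u c)
    (hv : ∀ c, 1 ≤ c → 0 < v c)
    (hα : Tendsto (fun c => (1/c) * Real.log (u c)) atTop (nhds α))
    (hβ : Tendsto (fun c => (1/c) * Real.log (v c)) atTop (nhds β)) :
    Tendsto (fun c => (1/c) * Real.log (u c + v c)) atTop (nhds (max α β)) := by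
  have hmax : Tendsto (fun c => max ((1/c) * Real.log (u c)) ((1/c) * Real.log (v c)))
      atTop (nhds (max α β)) := hα.max hβ
  have hadd : Tendsto (fun c => max ((1/c) * Real.log (u c)) ((1/c) * Real.log (v c))
      + Real.log 2 * (1/c)) atTop (nhds (max α β)) := by
    simpa using hmax.add (tendsto_const_nhds.mul one_div_tendsto_zero)
  refine tendsto_of_tendsto_of_tendsto_of_le_of_le' hmax hadd ?_ ?_
  · filter_upwards [eventually_ge_atTop (1:ℝ)] with c hc
    have hc0 : (0:ℝ) < c := lt_of_lt_of_le one_pos hc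
    have h1 : (1/c) * Real.log (u c) ≤ (1/c) * Real.log (u c + v c) := by
      apply mul_le_mul_of_nonneg_left _ (by positivity)
      exact Real.log_le_log (hu c hc) (by linarith [hv c hc])
    have h2 : (1/c) * Real.log (v c) ≤ (1/c) * Real.log (u c + v c) := by
      apply mul_le_mul_of_nonneg_left _ (by positivity)
      exact Real.log_le_log (hv c hc) (by linarith [hu c hc])
    exact max_le h1 h2
  · filter_upwards [eventually_ge_atTop (1:ℝ)] with c hc
    have hc0 : (0:ℝ) < c := lt_of_lt_of_le one_pos hc
    have hm : u c + v c ≤ 2 * max (u c) (v c) := by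
      rcases le_total (u c) (v c) with h | h
      · rw [max_eq_right h]; linarith
      · rw [max_eq_left h]; linarith
    have hmaxpos : 0 < max (u c) (v c) := lt_max_of_lt_left (hu c hc)
    have hkey : Real.log (u c + v c) ≤ Real.log 2 + Real.log (max (u c) (v c)) := by
      calc Real.log (u c + v c) ≤ Real.log (2 * max (u c) (v c)) :=
            Real.log_le_log (by linarith [hu c hc, hv c hc]) hm
        _ = Real.log 2 + Real.log (max (u c) (v c)) :=
            Real.log_mul two_ne_zero hmaxpos.ne'
    have hlm : Real.log (max (u c) (v c)) = max (Real.log (u c)) (Real.log (v c)) := by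
      rcases le_total (u c) (v c) with h | h
      · rw [max_eq_right h, max_eq_right (Real.log_le_log (hu c hc) h)]
      · rw [max_eq_left h, max_eq_left (Real.log_le_log (hv c hc) h)]
    calc (1/c) * Real.log (u c + v c)
        ≤ (1/c) * (Real.log 2 + Real.log (max (u c) (v c))) :=
          mul_le_mul_of_nonneg_left hkey (by positivity)
      _ = (1/c) * max (Real.log (u c)) (Real.log (v c)) + Real.log 2 * (1/c) := by
          rw [hlm]; ring
      _ = max ((1/c) * Real.log (u c)) ((1/c) * Real.log (v c)) + Real.log 2 * (1/c) := by
          rw [mul_max_of_nonneg _ _ (by positivity : (0:ℝ) ≤ 1/c)]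

lemma laplace {a b : ℝ} (hab : a < b) {f : ℝ → ℝ} (hf : ContinuousOn f (Set.Icc a b)) :
    Tendsto (fun c : ℝ => (1/c) * Real.log (∫ u in a..b, Real.exp (c * f u))) atTop
      (nhds (sSup (f '' Set.Icc a b))) := by
  have hne : (Set.Icc a b).Nonempty := Set.nonempty_Icc.2 hab.le
  obtain ⟨x₀, hx₀, hmax⟩ := isCompact_Icc.exists_isMaxOn hne hf
  set S := sSup (f '' Set.Icc a b) with hSdef
  have hbdd : BddAbove (f '' Set.Icc a b) := (isCompact_Icc.image_of_continuousOn hf).bddAbove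
  have hS : S = f x₀ := le_antisymm
    (csSup_le (hne.image f) (by rintro _ ⟨y, hy, rfl⟩; exact hmax hy))
    (le_csSup hbdd ⟨x₀, hx₀, rfl⟩)
  have hcont : ∀ c : ℝ, ContinuousOn (fun u => Real.exp (c * f u)) (Set.Icc a b) :=
    fun c => Real.continuous_exp.comp_continuousOn (continuousOn_const.mul hf)
  have hint : ∀ c : ℝ, IntervalIntegrable (fun u => Real.exp (c * f u)) volume a b :=
    fun c => ((hcont c).mono (by rw [Set.uIcc_of_le hab.le])).intervalIntegrable
  have hpos : ∀ c : ℝ, 0 < ∫ u in a..b, Real.exp (c * f u) := fun c =>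
    intervalIntegral_pos_of_pos_on (hint c) (fun x _ => Real.exp_pos _) hab
  have hub : ∀ c : ℝ, 0 < c →
      (1/c) * Real.log (∫ u in a..b, Real.exp (c * f u)) ≤ S + Real.log (b - a) * (1/c) := by
    intro c hc
    have hle : ∀ x ∈ Set.Icc a b, Real.exp (c * f x) ≤ Real.exp (c * S) := by
      intro x hx
      exact Real.exp_le_exp.2 (mul_le_mul_of_nonneg_left (hS ▸ hmax hx) hc.le)
    have h1 : (∫ u in a..b, Real.exp (c * f u)) ≤ (b - a) * Real.exp (c * S) := by
      have := intervalIntegral.integral_mono_on hab.le (hint c)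
        (_root_.intervalIntegrable_const (c := Real.exp (c * S))) hle
      simpa [mul_comm] using this
    have hlog := Real.log_le_log (hpos c) h1
    rw [Real.log_mul (by linarith : b - a ≠ 0) (Real.exp_ne_zero _), Real.log_exp] at hlog
    have h2 := mul_le_mul_of_nonneg_left hlog (by positivity : (0:ℝ) ≤ 1/c)
    calc (1/c) * Real.log (∫ u in a..b, Real.exp (c * f u))
        ≤ (1/c) * (Real.log (b - a) + c * S) := h2
      _ = S + Real.log (b - a) * (1/c) := by field_simp; ring
  rw [tendsto_order]
  constructor
  · intro x hx
    set ε := (S - x) / 2 with hε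
    have hε0 : 0 < ε := by rw [hε]; linarith
    have hcx : ContinuousWithinAt f (Set.Icc a b) x₀ := hf x₀ hx₀
    rw [Metric.continuousWithinAt_iff] at hcx
    obtain ⟨δ, hδ0, hδ⟩ := hcx ε hε0
    set l := max a (x₀ - δ/2) with hl
    set r := min b (x₀ + δ/2) with hr
    have hal : a ≤ l := le_max_left _ _
    have hrb : r ≤ b := min_le_left _ _
    have hlr : l < r := by
      apply max_lt <;> apply lt_min
      · exact hab
      · linarith [hx₀.1]
      · linarith [hx₀.2]
      · linarith
    have hsub : Set.Icc l r ⊆ Set.Icc a b := Set.Icc_subset_Icc hal hrb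
    have hflow : ∀ y ∈ Set.Icc l r, S - ε ≤ f y := by
      intro y hy
      have hyab : y ∈ Set.Icc a b := hsub hy
      have hdist : dist y x₀ < δ := by
        rw [Real.dist_eq, abs_lt]
        have h3 : x₀ - δ/2 ≤ l := le_max_right _ _
        have h4 : r ≤ x₀ + δ/2 := min_le_right _ _
        exact ⟨by linarith [hy.1], by linarith [hy.2]⟩
      have h5 := hδ hyab hdist
      rw [Real.dist_eq, abs_lt] at h5
      rw [hS]; linarith [h5.1]
    have hlow : ∀ c : ℝ, 0 < c →
        S - ε + Real.log (r - l) * (1/c) ≤ (1/c) * Real.log (∫ u in a..b, Real.exp (c * f u)) := by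
      intro c hc
      have hintlr : IntervalIntegrable (fun u => Real.exp (c * f u)) volume l r :=
        (hint c).mono_set (by rw [Set.uIcc_of_le hlr.le, Set.uIcc_of_le hab.le]; exact hsub)
      have hle : ∀ x ∈ Set.Icc l r, Real.exp (c * (S - ε)) ≤ Real.exp (c * f x) := by
        intro x hx
        exact Real.exp_le_exp.2 (mul_le_mul_of_nonneg_left (hflow x hx) hc.le)
      have h1 : (r - l) * Real.exp (c * (S - ε)) ≤ ∫ u in l..r, Real.exp (c * f u) := by
        have := intervalIntegral.integral_mono_on hlr.le
          (_root_.intervalIntegrable_const (c := Real.exp (c * (S - ε)))) hintlr hle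
        simpa [mul_comm] using this
      have h2 : (∫ u in l..r, Real.exp (c * f u)) ≤ ∫ u in a..b, Real.exp (c * f u) :=
        intervalIntegral.integral_mono_interval hal hlr.le hrb
          (Filter.Eventually.of_forall fun x => (Real.exp_pos _).le) (hint c)
      have hrl : 0 < (r - l) * Real.exp (c * (S - ε)) := by
        have : 0 < r - l := by linarith
        positivity
      have hlog : Real.log ((r - l) * Real.exp (c * (S - ε)))
          ≤ Real.log (∫ u in a..b, Real.exp (c * f u)) :=
        Real.log_le_log hrl (h1.trans h2)
      rw [Real.log_mul (by linarith : r - l ≠ 0) (Real.exp_ne_zero _), Real.log_exp] at hlog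
      have h3 := mul_le_mul_of_nonneg_left hlog (by positivity : (0:ℝ) ≤ 1/c)
      calc S - ε + Real.log (r - l) * (1/c)
          = (1/c) * (Real.log (r - l) + c * (S - ε)) := by field_simp; ring
        _ ≤ _ := h3
    have htend : Tendsto (fun c : ℝ => S - ε + Real.log (r - l) * (1/c)) atTop
        (nhds (S - ε)) := by
      simpa using (tendsto_const_nhds (x := S - ε)).add
        (tendsto_const_nhds.mul one_div_tendsto_zero)
    have hev : ∀ᶠ c : ℝ in atTop, x < S - ε + Real.log (r - l) * (1/c) :=
      htend.eventually_const_lt (by rw [hε]; linarith)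
    filter_upwards [hev, eventually_gt_atTop (0:ℝ)] with c h1 h2
    exact h1.trans_le (hlow c h2)
  · intro x hx
    have htend : Tendsto (fun c : ℝ => S + Real.log (b - a) * (1/c)) atTop (nhds S) := by
      simpa using (tendsto_const_nhds (x := S)).add
        (tendsto_const_nhds.mul one_div_tendsto_zero)
    filter_upwards [htend.eventually_lt_const hx, eventually_gt_atTop (0:ℝ)] with c h1 h2
    exact (hub c h2).trans_lt h1

lemma maxabs (x y z w : ℝ) :
    w - max (2*y) (2*x + 2*z) + max (2*x) (2*y) = w - z - |z + x - y| + |x - y| := by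
  rcases abs_cases (z + x - y) with ⟨h1, h1'⟩ | ⟨h1, h1'⟩ <;>
  rcases abs_cases (x - y) with ⟨h2, h2'⟩ | ⟨h2, h2'⟩ <;>
  rcases max_cases (2*y) (2*x + 2*z) with ⟨h3, h3'⟩ | ⟨h3, h3'⟩ <;>
  rcases max_cases (2*x) (2*y) with ⟨h4, h4'⟩ | ⟨h4, h4'⟩ <;>
  rw [h1, h2, h3, h4] <;> linarith

lemma sSup_two_mul {K : Set ℝ} (hne : K.Nonempty) (hbdd : BddAbove K) :
    sSup ((fun y : ℝ => 2 * y) '' K) = 2 * sSup K :=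
  (Monotone.map_csSup_of_continuousAt
    ((continuous_const.mul continuous_id).continuousAt)
    (fun p q h => by dsimp; linarith) hne hbdd).symm

end Aux

/-- The exponential additive functional. -/
noncomputable def A (φ : ℝ → ℝ) (s : ℝ) : ℝ := ∫ u in (0:ℝ)..s, Real.exp (2 * φ u)

/-- The transformation `𝒯^{(c)}` on paths over `[0,t]`. -/
noncomputable def Tc (c t : ℝ) (φ : ℝ → ℝ) (s : ℝ) : ℝ :=
  φ s - (1 / c) * Real.log
    (1 + A (fun u => c * φ u) s / A (fun u => c * φ u) t * (Real.exp (2 * c * φ t) - 1))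

/-- The transformation `ℳ` on paths over `[0,t]`. -/
noncomputable def M (t : ℝ) (φ : ℝ → ℝ) (s : ℝ) : ℝ :=
  φ s - φ t - |φ t + sSup (φ '' Set.Icc 0 s) - sSup (φ '' Set.Icc s t)|
    + |sSup (φ '' Set.Icc 0 s) - sSup (φ '' Set.Icc s t)|

theorem stmt16 (t : ℝ) (ht : 0 < t) (φ : ℝ → ℝ)
    (hφ : ContinuousOn φ (Set.Icc 0 t)) (hφ0 : φ 0 = 0) :
    ∀ s ∈ Set.Icc (0:ℝ) t,
      Tendsto (fun c => Tc c t φ s) atTop (nhds (M t φ s)) := by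
  have hbddt : BddAbove (φ '' Set.Icc 0 t) := (isCompact_Icc.image_of_continuousOn hφ).bddAbove
  have hMtphit : φ t ≤ sSup (φ '' Set.Icc 0 t) :=
    le_csSup hbddt ⟨t, ⟨ht.le, le_refl t⟩, rfl⟩
  have hMt0 : 0 ≤ sSup (φ '' Set.Icc 0 t) := by
    have := le_csSup hbddt ⟨0, ⟨le_refl 0, ht.le⟩, rfl⟩
    rwa [hφ0] at this
  intro s hs
  obtain ⟨hs0, hst⟩ := hs
  rcases eq_or_lt_of_le hs0 with h0 | h0
  · -- s = 0
    subst h0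
    have hTc : ∀ c : ℝ, Tc c t φ 0 = 0 := by
      intro c
      simp [Tc, A, intervalIntegral.integral_same, hφ0]
    have hM : M t φ 0 = 0 := by
      have h1 : sSup (φ '' Set.Icc (0:ℝ) 0) = 0 := by
        rw [Set.Icc_self, Set.image_singleton, csSup_singleton, hφ0]
      rw [M, h1, hφ0]
      rw [abs_of_nonpos (by linarith), abs_of_nonpos (by linarith)]
      ring
    simp only [hTc, hM]
    exact tendsto_const_nhds
  rcases eq_or_lt_of_le hst with h1 | h1
  · -- s = t
    subst h1
    have hApos : ∀ c : ℝ, 0 < A (fun u => c * φ u) s := by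
      intro c
      apply intervalIntegral.intervalIntegral_pos_of_pos_on _ (fun x _ => Real.exp_pos _) h0
      apply ContinuousOn.intervalIntegrable
      rw [Set.uIcc_of_le h0.le]
      exact Real.continuous_exp.comp_continuousOn
        (continuousOn_const.mul (continuousOn_const.mul hφ))
    have hM : M s φ s = -φ s := by
      have h2 : sSup (φ '' Set.Icc s s) = φ s := by
        rw [Set.Icc_self, Set.image_singleton, csSup_singleton]
      have hbdds : BddAbove (φ '' Set.Icc 0 s) := hbddt
      have hMs : φ s ≤ sSup (φ '' Set.Icc 0 s) := hMtphit
      have hM0 : 0 ≤ sSup (φ '' Set.Icc 0 s) := hMt0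
      rw [M, h2]
      rw [show φ s + sSup (φ '' Set.Icc 0 s) - φ s = sSup (φ '' Set.Icc 0 s) by ring]
      rw [abs_of_nonneg hM0, abs_of_nonneg (by linarith)]
      ring
    rw [hM]
    refine Tendsto.congr' ?_ tendsto_const_nhds
    filter_upwards [eventually_gt_atTop (0:ℝ)] with c hc
    rw [Tc, div_self (hApos c).ne']
    rw [show (1:ℝ) + 1 * (Real.exp (2 * c * φ s) - 1) = Real.exp (2 * c * φ s) by ring,
      Real.log_exp]
    field_simp
    ring
  · -- 0 < s < t
    set Ms := sSup (φ '' Set.Icc 0 s) with hMs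
    set Mt2 := sSup (φ '' Set.Icc s t) with hMt2
    have hφ1 : ContinuousOn φ (Set.Icc 0 s) := hφ.mono (Set.Icc_subset_Icc le_rfl h1.le)
    have hφ2 : ContinuousOn φ (Set.Icc s t) := hφ.mono (Set.Icc_subset_Icc hs0 le_rfl)
    set a : ℝ → ℝ := fun c => ∫ u in (0:ℝ)..s, Real.exp (c * (2 * φ u)) with ha
    set d : ℝ → ℝ := fun c => ∫ u in s..t, Real.exp (c * (2 * φ u)) with hd
    have hcont : ∀ c : ℝ, ContinuousOn (fun u => Real.exp (c * (2 * φ u))) (Set.Icc 0 t) :=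
      fun c => Real.continuous_exp.comp_continuousOn
        (continuousOn_const.mul (continuousOn_const.mul hφ))
    have hinta : ∀ c : ℝ, IntervalIntegrable (fun u => Real.exp (c * (2 * φ u))) MeasureTheory.volume 0 s := by
      intro c
      apply ContinuousOn.intervalIntegrable
      rw [Set.uIcc_of_le h0.le]
      exact (hcont c).mono (Set.Icc_subset_Icc le_rfl h1.le)
    have hintd : ∀ c : ℝ, IntervalIntegrable (fun u => Real.exp (c * (2 * φ u))) MeasureTheory.volume s t := by
      intro c
      apply ContinuousOn.intervalIntegrable
      rw [Set.uIcc_of_le h1.le]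
      exact (hcont c).mono (Set.Icc_subset_Icc hs0 le_rfl)
    have hapos : ∀ c : ℝ, 0 < a c := fun c =>
      intervalIntegral.intervalIntegral_pos_of_pos_on (hinta c) (fun x _ => Real.exp_pos _) h0
    have hdpos : ∀ c : ℝ, 0 < d c := fun c =>
      intervalIntegral.intervalIntegral_pos_of_pos_on (hintd c) (fun x _ => Real.exp_pos _) h1
    have hadd : ∀ c : ℝ, a c + d c = ∫ u in (0:ℝ)..t, Real.exp (c * (2 * φ u)) :=
      fun c => intervalIntegral.integral_add_adjacent_intervals (hinta c) (hintd c)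
    -- Laplace asymptotics
    have hbdd1 : BddAbove (φ '' Set.Icc 0 s) := (isCompact_Icc.image_of_continuousOn hφ1).bddAbove
    have hbdd2 : BddAbove (φ '' Set.Icc s t) := (isCompact_Icc.image_of_continuousOn hφ2).bddAbove
    have hne1 : (φ '' Set.Icc 0 s).Nonempty := (Set.nonempty_Icc.2 h0.le).image φ
    have hne2 : (φ '' Set.Icc s t).Nonempty := (Set.nonempty_Icc.2 h1.le).image φ
    have hsup1 : sSup ((fun u => 2 * φ u) '' Set.Icc 0 s) = 2 * Ms := by
      rw [show (fun u => 2 * φ u) '' Set.Icc 0 s = (fun y : ℝ => 2 * y) '' (φ '' Set.Icc 0 s) by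
        rw [Set.image_image]]
      exact sSup_two_mul hne1 hbdd1
    have hsup2 : sSup ((fun u => 2 * φ u) '' Set.Icc s t) = 2 * Mt2 := by
      rw [show (fun u => 2 * φ u) '' Set.Icc s t = (fun y : ℝ => 2 * y) '' (φ '' Set.Icc s t) by
        rw [Set.image_image]]
      exact sSup_two_mul hne2 hbdd2
    have hLa : Tendsto (fun c : ℝ => (1/c) * Real.log (a c)) atTop (nhds (2 * Ms)) := by
      have := laplace h0 (f := fun u => 2 * φ u) (continuousOn_const.mul hφ1)
      rwa [hsup1] at this
    have hLd : Tendsto (fun c : ℝ => (1/c) * Real.log (d c)) atTop (nhds (2 * Mt2)) := by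
      have := laplace h1 (f := fun u => 2 * φ u) (continuousOn_const.mul hφ2)
      rwa [hsup2] at this
    set v : ℝ → ℝ := fun c => a c * Real.exp (c * (2 * φ t)) with hv
    have hvpos : ∀ c : ℝ, 0 < v c := fun c => mul_pos (hapos c) (Real.exp_pos _)
    have hLv : Tendsto (fun c : ℝ => (1/c) * Real.log (v c)) atTop
        (nhds (2 * Ms + 2 * φ t)) := by
      refine Tendsto.congr' ?_ (hLa.add (tendsto_const_nhds (x := 2 * φ t)))
      filter_upwards [eventually_gt_atTop (0:ℝ)] with c hc
      rw [hv]
      dsimp only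
      rw [Real.log_mul (hapos c).ne' (Real.exp_ne_zero _), Real.log_exp]
      field_simp
    have hS1 : Tendsto (fun c : ℝ => (1/c) * Real.log (d c + v c)) atTop
        (nhds (max (2 * Mt2) (2 * Ms + 2 * φ t))) :=
      log_add_tendsto (fun c _ => hdpos c) (fun c _ => hvpos c) hLd hLv
    have hS2 : Tendsto (fun c : ℝ => (1/c) * Real.log (a c + d c)) atTop
        (nhds (max (2 * Ms) (2 * Mt2))) :=
      log_add_tendsto (fun c _ => hapos c) (fun c _ => hdpos c) hLa hLd
    have htot : Tendsto (fun c : ℝ => φ s - (1/c) * Real.log (d c + v c)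
        + (1/c) * Real.log (a c + d c)) atTop
        (nhds (φ s - max (2 * Mt2) (2 * Ms + 2 * φ t) + max (2 * Ms) (2 * Mt2))) :=
      (tendsto_const_nhds.sub hS1).add hS2
    have hfin : φ s - max (2 * Mt2) (2 * Ms + 2 * φ t) + max (2 * Ms) (2 * Mt2) = M t φ s := by
      rw [M, ← hMs, ← hMt2]
      exact maxabs Ms Mt2 (φ t) (φ s)
    rw [← hfin]
    refine Tendsto.congr' ?_ htot
    filter_upwards [eventually_gt_atTop (0:ℝ)] with c hc
    have hAs : A (fun u => c * φ u) s = a c := by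
      rw [A, ha]
      congr 1
      funext u
      ring_nf
    have hAt : A (fun u => c * φ u) t = a c + d c := by
      rw [A, hadd c]
      congr 1
      funext u
      ring_nf
    have hE : Real.exp (2 * c * φ t) = Real.exp (c * (2 * φ t)) := by ring_nf
    have hb0 : (0:ℝ) < a c + d c := by linarith [hapos c, hdpos c]
    have harg : 1 + a c / (a c + d c) * (Real.exp (c * (2 * φ t)) - 1)
        = (d c + v c) / (a c + d c) := by
      rw [hv]
      dsimp only
      field_simp
      ring
    rw [Tc, hAs, hAt, hE, harg, Real.log_div (by linarith [hdpos c, hvpos c] : d c + v c ≠ 0) hb0.ne']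
    ring
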